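/- Let ν ≥ 1 be a real number, T ≥ 1 an integer, and let Δ_1, Δ_2, …, Δ_T be nonnegative reals that are nondecreasing with Δ_1 = 0. Define Φ(r) = √(ν/r) + Δ_r for 1 ≤ r ≤ T, Φ* = min_{1 ≤ r ≤ T} Φ(r), and r̃ = max{1 ≤ r ≤ T : Δ_r < √(ν/r)} (which exists since Δ_1 = 0 < √ν). Then Φ(r̃) ≤ 3·Φ*. -/
import Mathlib


/-- if `r̃` is the largest `r ∈ {1, …, T}` with `Δ_r < √(ν/r)`,
then `Φ(r̃) ≤ 3·Φ*` where `Φ(r) = √(ν/r) + Δ_r` and `Φ* = min_{1 ≤ r ≤ T} Φ(r)`. -/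
theorem stmt13 (ν : ℝ) (hν : 1 ≤ ν) (T : ℕ) (hT : 1 ≤ T)
    (Δ : ℕ → ℝ) (hΔ0 : ∀ r, 0 ≤ Δ r) (hΔ1 : Δ 1 = 0)
    (hΔmono : ∀ r s, 1 ≤ r → r ≤ s → s ≤ T → Δ r ≤ Δ s)
    (rt : ℕ) (hrt1 : 1 ≤ rt) (hrtT : rt ≤ T)
    (hrtlt : Δ rt < Real.sqrt (ν / rt))
    (hrtmax : ∀ r, 1 ≤ r → r ≤ T → Δ r < Real.sqrt (ν / r) → r ≤ rt) :
    Real.sqrt (ν / rt) + Δ rt ≤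
      3 * (Finset.Icc 1 T).inf' (Finset.nonempty_Icc.mpr hT)
        (fun r => Real.sqrt (ν / r) + Δ r) := by
  obtain ⟨rs, hrs, heq⟩ := Finset.exists_mem_eq_inf' (Finset.nonempty_Icc.mpr hT)
    (fun r => Real.sqrt (ν / r) + Δ r)
  rw [heq]
  simp only [Finset.mem_Icc] at hrs
  obtain ⟨hrs1, hrsT⟩ := hrs
  have hν0 : (0:ℝ) ≤ ν := le_trans zero_le_one hν
  have hΦ0 : ∀ r : ℕ, (0:ℝ) ≤ Real.sqrt (ν / r) + Δ r := fun r =>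
    add_nonneg (Real.sqrt_nonneg _) (hΔ0 r)
  have hmono : ∀ a b : ℕ, 1 ≤ a → a ≤ b → Real.sqrt (ν / b) ≤ Real.sqrt (ν / a) := by
    intro a b ha hab
    apply Real.sqrt_le_sqrt
    apply div_le_div_of_nonneg_left hν0
    · exact_mod_cast ha
    · exact_mod_cast hab
  rcases le_or_gt rs rt with h | h
  · -- Φ(rt) ≤ 2 √(ν/rt) ≤ 2 √(ν/rs) ≤ 2 Φ(rs) ≤ 3 Φ(rs)
    have h1 : Real.sqrt (ν / rt) + Δ rt ≤ 2 * Real.sqrt (ν / rt) := by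
      nlinarith [hrtlt]
    have h2 : Real.sqrt (ν / rt) ≤ Real.sqrt (ν / rs) := hmono rs rt hrs1 h
    nlinarith [hΦ0 rs, Real.sqrt_nonneg (ν / rs), hΔ0 rs]
  · -- rt < rs, so Δ(rt+1) ≥ √(ν/(rt+1))
    have hkey : Real.sqrt (ν / (rt+1)) ≤ Δ (rt+1) := by
      by_contra hc
      push_neg at hc
      have := hrtmax (rt+1) (by omega) (by omega) (by exact_mod_cast hc)
      omega
    have hΔle : Δ (rt+1) ≤ Δ rs := hΔmono (rt+1) rs (by omega) (by omega) hrsT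
    -- √(ν/rt) ≤ √2 · √(ν/(rt+1))
    have hsq : Real.sqrt (ν / rt) ≤ Real.sqrt 2 * Real.sqrt (ν / (rt+1)) := by
      rw [← Real.sqrt_mul (by norm_num)]
      apply Real.sqrt_le_sqrt
      have hrtpos : (0:ℝ) < rt := by exact_mod_cast hrt1
      have h2 : (rt:ℝ) + 1 ≤ 2 * rt := by
        have : (1:ℝ) ≤ rt := by exact_mod_cast hrt1
        linarith
      rw [div_le_iff₀ hrtpos]
      have hpos1 : (0:ℝ) < (rt:ℝ)+1 := by linarith
      have : (2:ℝ) * (ν / ((rt:ℝ)+1)) * rt = 2 * ν * rt / ((rt:ℝ)+1) := by ring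
      push_cast
      rw [this, le_div_iff₀ hpos1]
      nlinarith
    have h1 : Real.sqrt (ν / rt) + Δ rt ≤ 2 * Real.sqrt (ν / rt) := by
      nlinarith [hrtlt]
    have hs2 : Real.sqrt 2 ≤ 1.5 := by
      rw [show (1.5:ℝ) = Real.sqrt (1.5^2) by rw [Real.sqrt_sq]; norm_num]
      apply Real.sqrt_le_sqrt; norm_num
    have hΦrs : Real.sqrt (ν / (rt+1)) ≤ Real.sqrt (ν / rs) + Δ rs := by
      have := Real.sqrt_nonneg (ν / rs)
      linarith
    have hnn : 0 ≤ Real.sqrt (ν / (rt+1)) := Real.sqrt_nonneg _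
    nlinarith [Real.sqrt_nonneg (2:ℝ)]
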